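/- arXiv:1009.3411 — 4 statements merged into one kernel-verified Lean document; each statement's English description precedes it below -/
import Mathlib

section
/- For the 1×1 matrix A = (p) with p an odd positive integer, and for 0 ≤ i < p, the minimum of (ξ²/p − 1)/4 over integers ξ with ξ ≡ p (mod 2) and ξ ≡ i (mod p) equals (1/4)·((1/p)·((p + (−1)^i·p)/2 − i)² − 1). -/
theorem min_char_one_by_one (p : ℤ) (hp : 0 < p) (hodd : Odd p) (i : ℕ) (hi : (i : ℤ) < p) :
    IsLeast {q : ℚ | ∃ ξ : ℤ, ξ ≡ p [ZMOD 2] ∧ ξ ≡ (i : ℤ) [ZMOD p] ∧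
        q = ((ξ : ℚ) ^ 2 / (p : ℚ) - 1) / 4}
      ((1 / 4) * ((1 / (p : ℚ)) * (((p : ℚ) + (-1 : ℚ) ^ i * (p : ℚ)) / 2 - (i : ℚ)) ^ 2 - 1)) := by
  have hpQ : (p : ℚ) ≠ 0 := by exact_mod_cast hp.ne'
  rcases Nat.even_or_odd i with he | ho
  · -- i even, minimizer ξ₀ = i - p
    have heZ : Even ((i : ℤ)) := by exact_mod_cast he
    have hneg : (-1 : ℚ) ^ i = 1 := he.neg_one_pow
    constructor
    · refine ⟨(i : ℤ) - p, ?_, ?_, ?_⟩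
      · obtain ⟨a, ha⟩ := heZ
        obtain ⟨b, hb⟩ := hodd
        show ((i : ℤ) - p) % 2 = p % 2
        omega
      · calc ((i : ℤ) - p) ≡ (i : ℤ) - 0 [ZMOD p] :=
              Int.ModEq.sub (Int.ModEq.refl _) (Int.modEq_zero_iff_dvd.mpr dvd_rfl)
          _ = (i : ℤ) := by ring
      · rw [hneg]
        push_cast
        try ring
    · rintro q ⟨ξ, h2, hpm, rfl⟩
      obtain ⟨k, hk⟩ : p ∣ (i : ℤ) - ξ := hpm.dvd
      have hξ : ξ = (i : ℤ) - p * k := by linarith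
      have hEv : Even (p - ξ) := by
        obtain ⟨c, hc⟩ := h2.dvd
        exact ⟨c, by omega⟩
      rw [hξ] at hEv
      have hkodd : Odd k := by
        simp [Int.even_sub, Int.even_mul, parity_simps,
          Int.not_even_iff_odd.2 hodd, heZ] at hEv
        exact hEv
      obtain ⟨m, rfl⟩ := hkodd
      have hi0 : (0 : ℤ) ≤ (i : ℤ) := Int.natCast_nonneg i
      have key : ((i : ℤ) - p) ^ 2 ≤ ξ ^ 2 := by
        rw [hξ]
        rcases le_or_gt 0 m with hm | hm
        · have h1 : 0 ≤ p * m := mul_nonneg hp.le hm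
          have h2' : 0 ≤ p * (m + 1) - (i : ℤ) := by nlinarith
          nlinarith [mul_nonneg h1 h2']
        · have hm' : m ≤ -1 := by omega
          have h1 : p * m ≤ 0 := mul_nonpos_of_nonneg_of_nonpos hp.le (by omega)
          have h2' : p * (m + 1) - (i : ℤ) ≤ 0 := by nlinarith
          nlinarith [mul_nonneg (neg_nonneg.2 h1) (neg_nonneg.2 h2')]
      have keyQ : (((i : ℤ) - p : ℤ) : ℚ) ^ 2 ≤ (ξ : ℚ) ^ 2 := by exact_mod_cast key
      rw [hneg]
      have hle : ((((i : ℤ) - p : ℤ) : ℚ) ^ 2 / (p : ℚ) - 1) / 4 ≤ ((ξ : ℚ) ^ 2 / (p : ℚ) - 1) / 4 := by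
        gcongr
        try exact_mod_cast hp
      refine le_trans (le_of_eq ?_) hle
      push_cast
      try ring
  · -- i odd, minimizer ξ₀ = i
    have hoZ : Odd ((i : ℤ)) := by exact_mod_cast ho
    have hneg : (-1 : ℚ) ^ i = -1 := ho.neg_one_pow
    constructor
    · refine ⟨(i : ℤ), ?_, Int.ModEq.refl _, ?_⟩
      · obtain ⟨a, ha⟩ := hoZ
        obtain ⟨b, hb⟩ := hodd
        show ((i : ℤ)) % 2 = p % 2
        omega
      · rw [hneg]
        push_cast
        try ring
    · rintro q ⟨ξ, h2, hpm, rfl⟩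
      obtain ⟨k, hk⟩ : p ∣ (i : ℤ) - ξ := hpm.dvd
      have hξ : ξ = (i : ℤ) - p * k := by linarith
      have hEv : Even (p - ξ) := by
        obtain ⟨c, hc⟩ := h2.dvd
        exact ⟨c, by omega⟩
      rw [hξ] at hEv
      have hkev : Even k := by
        simp [Int.even_sub, Int.even_mul, parity_simps,
          Int.not_even_iff_odd.2 hodd, Int.not_even_iff_odd.2 hoZ] at hEv
        exact hEv
      obtain ⟨m, rfl⟩ := hkev
      have hi0 : (0 : ℤ) ≤ (i : ℤ) := Int.natCast_nonneg i
      have key : ((i : ℤ)) ^ 2 ≤ ξ ^ 2 := by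
        rw [hξ]
        rcases lt_trichotomy m 0 with hm | hm | hm
        · have hm' : m ≤ -1 := by omega
          have h1 : p * m ≤ -p := by nlinarith
          nlinarith [mul_nonneg (neg_nonneg.2 (by nlinarith : p * m ≤ 0))
            (neg_nonneg.2 (by nlinarith : p * m - (i:ℤ) ≤ 0))]
        · simp [hm]
        · have hm' : 1 ≤ m := hm
          have h1 : p ≤ p * m := by nlinarith
          nlinarith [mul_nonneg (by nlinarith : (0:ℤ) ≤ p * m)
            (by nlinarith : (0:ℤ) ≤ p * m - (i:ℤ))]
      have keyQ : (((i : ℤ) : ℚ)) ^ 2 ≤ (ξ : ℚ) ^ 2 := by exact_mod_cast key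
      rw [hneg]
      have hle : (((i : ℤ) : ℚ) ^ 2 / (p : ℚ) - 1) / 4 ≤ ((ξ : ℚ) ^ 2 / (p : ℚ) - 1) / 4 := by
        gcongr
        try exact_mod_cast hp
      refine le_trans (le_of_eq ?_) hle
      push_cast
      try ring
end

section
/- For Q = [[17, -4], [-4, 15]], let M_Q(0) denote the minimum of (ξᵗQ⁻¹ξ − 2)/4 over vectors ξ ∈ ℤ² with ξ₁ odd, ξ₂ odd, and ξ ≡ 0 in ℤ²/Qℤ² (i.e. Q⁻¹ξ ∈ ℤ²); then M_Q(0) = 11/2. -/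
theorem MQ_zero_eq_eleven_halves :
    let Q : Matrix (Fin 2) (Fin 2) ℤ := !![17, -4; -4, 15]
    let Qq : Matrix (Fin 2) (Fin 2) ℚ := !![17, -4; -4, 15]
    IsLeast {q : ℚ | ∃ ξ : Fin 2 → ℤ, Odd (ξ 0) ∧ Odd (ξ 1) ∧
        (∃ v : Fin 2 → ℤ, Q.mulVec v = ξ) ∧
        q = (dotProduct (fun j => (ξ j : ℚ)) (Qq⁻¹.mulVec fun j => (ξ j : ℚ)) - 2) / 4}
      (11 / 2) := by
  intro Q Qq
  have hinv : Qq⁻¹ = !![15/239, 4/239; 4/239, 17/239] := by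
    rw [Matrix.inv_def]
    simp [Qq, Matrix.adjugate_fin_two, Matrix.det_fin_two_of]
    norm_num
  constructor
  · refine ⟨![13, 11], ⟨6, by norm_num⟩, ⟨5, by norm_num⟩, ⟨![1, 1], ?_⟩, ?_⟩
    · funext i; fin_cases i <;> simp [Q, Matrix.mulVec, dotProduct, Fin.sum_univ_two]
    · rw [hinv]
      simp [Matrix.mulVec, dotProduct, Fin.sum_univ_two]
      norm_num
  · rintro q ⟨ξ, h0, h1, ⟨v, hv⟩, hq⟩
    have e0 : 17 * v 0 - 4 * v 1 = ξ 0 := by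
      have := congrFun hv 0
      simpa [Q, Matrix.mulVec, dotProduct, Fin.sum_univ_two, Matrix.vecHead, Matrix.vecTail, sub_eq_add_neg] using this
    have e1 : -4 * v 0 + 15 * v 1 = ξ 1 := by
      have := congrFun hv 1
      simpa [Q, Matrix.mulVec, dotProduct, Fin.sum_univ_two, Matrix.vecHead, Matrix.vecTail] using this
    have ha : Odd (v 0) := by
      rw [Int.odd_iff] at h0 ⊢; omega
    have hb : Odd (v 1) := by
      rw [Int.odd_iff] at h1 ⊢; omega
    have hane : v 0 ≠ 0 := by rw [Int.odd_iff] at ha; omega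
    have hbne : v 1 ≠ 0 := by rw [Int.odd_iff] at hb; omega
    have ha2 : (1:ℤ) ≤ v 0 ^ 2 := by
      have h2 : 1 ≤ |v 0| := Int.one_le_abs hane
      nlinarith [sq_abs (v 0), abs_nonneg (v 0)]
    have hb2 : (1:ℤ) ≤ v 1 ^ 2 := by
      have h2 : 1 ≤ |v 1| := Int.one_le_abs hbne
      nlinarith [sq_abs (v 1), abs_nonneg (v 1)]
    have key : (24:ℤ) ≤ 17 * v 0 ^ 2 - 8 * (v 0 * v 1) + 15 * v 1 ^ 2 := by
      nlinarith [sq_nonneg (v 0 - v 1)]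
    have c0 : ((ξ 0 : ℚ)) = 17 * (v 0 : ℚ) - 4 * (v 1 : ℚ) := by
      exact_mod_cast e0.symm
    have c1 : ((ξ 1 : ℚ)) = -4 * (v 0 : ℚ) + 15 * (v 1 : ℚ) := by
      exact_mod_cast e1.symm
    have hqv : q = ((17 * (v 0:ℚ) ^ 2 - 8 * ((v 0:ℚ) * (v 1:ℚ)) + 15 * (v 1:ℚ) ^ 2) - 2) / 4 := by
      rw [hq, hinv]
      simp [Matrix.mulVec, dotProduct, Fin.sum_univ_two]
      rw [c0, c1]
      ring
    rw [hqv]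
    have : (24:ℚ) ≤ 17 * (v 0:ℚ) ^ 2 - 8 * ((v 0:ℚ) * (v 1:ℚ)) + 15 * (v 1:ℚ) ^ 2 := by
      exact_mod_cast key
    linarith
end

section
/- For Q = [[17,-4],[-4,15]] and g = (0,1)ᵗ, let M_Q(15·g) denote the minimum of (ξᵗQ⁻¹ξ − 2)/4 over characteristic vectors ξ (both coordinates odd) with [ξ] = 15·g in ℤ²/Qℤ²; then M_Q(15·g) + 119/478 = 4. -/
lemma key_quad (v1 v2 a b : ℤ) (e1 : a = 17*v1-4*v2) (e2 : b = 15-4*v1+15*v2)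
    (ha : Odd a) (hb : Odd b) : 4064 ≤ 15*a^2+8*a*b+17*b^2 := by
  by_contra h
  push_neg at h
  rw [Int.odd_iff] at ha hb
  have hA : a^2 ≤ 289 := by nlinarith [sq_nonneg (4*a+17*b)]
  have hB : b^2 ≤ 255 := by nlinarith [sq_nonneg (15*a+4*b)]
  have ha17 : -17 ≤ a ∧ a ≤ 17 := by
    constructor
    · nlinarith [sq_nonneg (a+17)]
    · nlinarith [sq_nonneg (a-17)]
  have hb15 : -15 ≤ b ∧ b ≤ 15 := by
    constructor
    · nlinarith [sq_nonneg (b+15)]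
    · nlinarith [sq_nonneg (b-15)]
  have hp1 : v1 % 2 = 1 := by clear h hA hB ha17 hb15 hb e2; omega
  have hp2 : v2 % 2 = 0 := by clear h hA hB ha17 hb15 ha e1 hp1; omega
  have hw1 : 239*v1 = 15*a+4*b-60 := by linarith
  have hw2 : 239*v2 = 4*a+17*b-255 := by linarith
  have hv1 : v1 = -1 ∨ v1 = 1 := by clear h hA hB e1 e2 hw2 hp2; omega
  have hv2 : v2 = -2 ∨ v2 = 0 := by clear h hA hB e1 e2 hw1 hp1; omega
  subst e1; subst e2
  rcases hv1 with h1 | h1 <;> rcases hv2 with h2 | h2 <;> subst h1 <;> subst h2 <;> norm_num at h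

lemma dot_eval (ξ : Fin 2 → ℤ) :
    dotProduct (fun j => (ξ j : ℚ))
      (((!![17, -4; -4, 15] : Matrix (Fin 2) (Fin 2) ℚ))⁻¹.mulVec fun j => (ξ j : ℚ))
      = (15*(ξ 0 : ℚ)^2 + 8*(ξ 0 : ℚ)*(ξ 1 : ℚ) + 17*(ξ 1 : ℚ)^2)/239 := by
  rw [Matrix.inv_def]
  simp [Matrix.adjugate_fin_two, Matrix.det_fin_two, dotProduct, Matrix.mulVec,
    Fin.sum_univ_two]
  ring

theorem MQ_fifteen_g_value :
    let Q : Matrix (Fin 2) (Fin 2) ℤ := !![17, -4; -4, 15]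
    let Qq : Matrix (Fin 2) (Fin 2) ℚ := !![17, -4; -4, 15]
    IsLeast {q : ℚ | ∃ ξ : Fin 2 → ℤ, Odd (ξ 0) ∧ Odd (ξ 1) ∧
        (∃ v : Fin 2 → ℤ, ξ = ![0, 15] + Q.mulVec v) ∧
        q = (dotProduct (fun j => (ξ j : ℚ)) (Qq⁻¹.mulVec fun j => (ξ j : ℚ)) - 2) / 4}
      (4 - 119 / 478) := by
  intro Q Qq
  constructor
  · refine ⟨![-9, -11], ⟨-5, by norm_num⟩, ⟨-6, by norm_num⟩, ⟨![-1, -2], ?_⟩, ?_⟩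
    · funext i
      fin_cases i <;>
        simp [Q, Matrix.mulVec, dotProduct, Fin.sum_univ_two]
    · rw [dot_eval]
      norm_num
  · rintro q ⟨ξ, h0, h1, ⟨v, hv⟩, rfl⟩
    have e0 : ξ 0 = 17 * v 0 - 4 * v 1 := by
      have := congrFun hv 0
      simp [Q, Matrix.mulVec, dotProduct, Fin.sum_univ_two] at this
      linarith
    have e1 : ξ 1 = 15 - 4 * v 0 + 15 * v 1 := by
      have := congrFun hv 1
      simp [Q, Matrix.mulVec, dotProduct, Fin.sum_univ_two] at this
      linarith
    have hk := key_quad (v 0) (v 1) (ξ 0) (ξ 1) e0 e1 h0 h1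
    have hq : (4064 : ℚ) ≤ 15*(ξ 0 : ℚ)^2 + 8*(ξ 0 : ℚ)*(ξ 1 : ℚ) + 17*(ξ 1 : ℚ)^2 := by
      exact_mod_cast hk
    rw [dot_eval]
    linarith
end

section
/- Let p = 239 and define f(i) = (1/4)·((1/p)·((p + (−1)^i·p)/2 − i)² − 1) for i ∈ {0,...,238}. Then for every unit u ∈ (ℤ/239ℤ)× and every ε ∈ {±1}, there exists i such that ε·M_Q(u·i·g) − f(i) is either not an even integer or is positive, where Q = [[17,-4],[-4,15]] and g = (0,1)ᵗ generates ℤ²/Qℤ². -/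
/-!
Take `i = 1`, so `f 1 = -119/478` and the class is `c • g` with `c ≡ u`; the argument works for
every element of `S`, not only its minimum. For odd `ξ` put `N = ξᵗ adj(Q) ξ = 239 ξᵗQ⁻¹ξ`.
Then `ε M - f 1` is `(N - 240)/956` for `ε = 1` and `(716 - N)/956` for `ε = -1`.
For `ε = 1`, an even non-positive value forces `N = 240` (as `N > 0`), which no odd vector
attains. For `ε = -1`, an even value forces `N ≡ -1 [ZMOD 239]`; but `ξᵗ adj(Q) ξ` is well
defined modulo `det Q = 239` on `ℤ²/Qℤ²`, so `N ≡ 17 c²`, and `-17` is not a square mod `239`.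
-/

open Matrix

section
variable {n : Type*} [Fintype n] [DecidableEq n]

theorem Matrix.IsSymm.dotProduct_adjugate_mulVec_add_mulVec {R : Type*} [CommRing R]
    {Q : Matrix n n R} (hQ : Q.IsSymm) (v x : n → R) :
    (v + Q *ᵥ x) ⬝ᵥ (Q.adjugate *ᵥ (v + Q *ᵥ x)) =
      v ⬝ᵥ (Q.adjugate *ᵥ v) + Q.det * (2 * (v ⬝ᵥ x) + x ⬝ᵥ (Q *ᵥ x)) := by
  have hQx : Q *ᵥ x = x ᵥ* Q := by rw [← vecMul_transpose, hQ.eq]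
  have hQadj : Q *ᵥ Q.adjugate *ᵥ v = Q.det • v := by
    rw [mulVec_mulVec, mul_adjugate, smul_mulVec, one_mulVec]
  have hadjQ : Q.adjugate *ᵥ Q *ᵥ x = Q.det • x := by
    rw [mulVec_mulVec, adjugate_mul, smul_mulVec, one_mulVec]
  rw [mulVec_add, hadjQ, dotProduct_add, add_dotProduct, add_dotProduct, hQx,
    ← dotProduct_mulVec, ← dotProduct_mulVec, ← hQx, hQadj]
  simp only [mulVec_smul, dotProduct_smul, smul_eq_mul, dotProduct_comm x v]
  ring

theorem Matrix.IsSymm.dotProduct_adjugate_mulVec_modEq_of_mk_eq {Q : Matrix n n ℤ}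
    (hQ : Q.IsSymm) {ξ v : n → ℤ}
    (h : (Submodule.Quotient.mk ξ : (n → ℤ) ⧸ LinearMap.range Q.toLin') =
      Submodule.Quotient.mk v) :
    ξ ⬝ᵥ (Q.adjugate *ᵥ ξ) ≡ v ⬝ᵥ (Q.adjugate *ᵥ v) [ZMOD Q.det] := by
  obtain ⟨x, hx⟩ := (Submodule.Quotient.eq _).mp h
  rw [toLin'_apply, eq_sub_iff_add_eq'] at hx
  rw [← hx, hQ.dotProduct_adjugate_mulVec_add_mulVec]
  exact Int.add_mul_emod_self_left _ _ _

theorem Matrix.intCast_dotProduct_inv_mulVec {K : Type*} [Field K] (Q : Matrix n n ℤ)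
    (ξ : n → ℤ) :
    (fun j => (ξ j : K)) ⬝ᵥ ((Q.map (Int.cast : ℤ → K))⁻¹ *ᵥ fun j => (ξ j : K)) =
      ((ξ ⬝ᵥ (Q.adjugate *ᵥ ξ) : ℤ) : K) / (Q.det : K) := by
  let f := Int.castRingHom K
  have hcast : ((ξ ⬝ᵥ (Q.adjugate *ᵥ ξ) : ℤ) : K) =
      (f ∘ ξ) ⬝ᵥ ((f.mapMatrix Q).adjugate *ᵥ (f ∘ ξ)) := by
    rw [← f.map_adjugate, RingHom.mapMatrix_apply, ← funext (f.map_mulVec _ _)]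
    exact f.map_dotProduct _ _
  rw [hcast, Int.cast_det, inv_def, Ring.inverse_eq_inv', smul_mulVec, dotProduct_smul,
    smul_eq_mul, div_eq_inv_mul]
  rfl

end

lemma goeritz_isSymm : (!![17, -4; -4, 15] : Matrix (Fin 2) (Fin 2) ℤ).IsSymm := by
  ext i j; fin_cases i <;> fin_cases j <;> rfl

lemma goeritz_det : (!![17, -4; -4, 15] : Matrix (Fin 2) (Fin 2) ℤ).det = 239 := by
  simp [det_fin_two_of]

lemma goeritz_map_intCast :
    (!![17, -4; -4, 15] : Matrix (Fin 2) (Fin 2) ℤ).map (Int.cast : ℤ → ℚ) =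
      !![17, -4; -4, 15] := by
  ext i j; fin_cases i <;> fin_cases j <;> simp

lemma goeritz_adjugate_form (ξ : Fin 2 → ℤ) :
    ξ ⬝ᵥ ((!![17, -4; -4, 15] : Matrix (Fin 2) (Fin 2) ℤ).adjugate *ᵥ ξ) =
      15 * ξ 0 ^ 2 + 8 * ξ 0 * ξ 1 + 17 * ξ 1 ^ 2 := by
  simp [adjugate_fin_two_of, dotProduct, mulVec, Fin.sum_univ_two]
  ring

lemma goeritz_form_pos {A B : ℤ} (hA : A ≠ 0) : 0 < 15 * A ^ 2 + 8 * A * B + 17 * B ^ 2 := by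
  have := sq_pos_of_ne_zero hA
  nlinarith [sq_nonneg (A + B), sq_nonneg B]

lemma goeritz_form_ne_240 {A B : ℤ} (hA : Odd A) (hB : Odd B) :
    15 * A ^ 2 + 8 * A * B + 17 * B ^ 2 ≠ 240 := by
  intro h
  have hA4 : -4 ≤ A ∧ A ≤ 4 := by constructor <;> nlinarith [sq_nonneg (A + B), sq_nonneg B]
  have hB4 : -4 ≤ B ∧ B ≤ 4 := by constructor <;> nlinarith [sq_nonneg (A + B), sq_nonneg A]
  obtain ⟨k, rfl⟩ := hA
  obtain ⟨l, rfl⟩ := hB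
  obtain ⟨hk1, hk2⟩ : -2 ≤ k ∧ k ≤ 1 := by omega
  obtain ⟨hl1, hl2⟩ : -2 ≤ l ∧ l ≤ 1 := by omega
  interval_cases k <;> interval_cases l <;> omega

lemma goeritz_form_modEq_of_mk_eq {ξ : Fin 2 → ℤ} {c : ℕ}
    (h : (Submodule.Quotient.mk ξ : (Fin 2 → ℤ) ⧸
        LinearMap.range (toLin' (!![17, -4; -4, 15] : Matrix (Fin 2) (Fin 2) ℤ))) =
      c • Submodule.Quotient.mk ![0, 1]) :
    ξ ⬝ᵥ ((!![17, -4; -4, 15] : Matrix (Fin 2) (Fin 2) ℤ).adjugate *ᵥ ξ) ≡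
      17 * (c : ℤ) ^ 2 [ZMOD 239] := by
  have hv : (c • ![0, 1] : Fin 2 → ℤ) ⬝ᵥ
      ((!![17, -4; -4, 15] : Matrix (Fin 2) (Fin 2) ℤ).adjugate *ᵥ (c • ![0, 1])) =
        17 * (c : ℤ) ^ 2 := by
    rw [goeritz_adjugate_form]; simp
  rw [← hv, ← goeritz_det]
  exact goeritz_isSymm.dotProduct_adjugate_mulVec_modEq_of_mk_eq
    (h.trans (Submodule.Quotient.mk_smul _ _ _).symm)

set_option maxRecDepth 8000 in
lemma seventeen_mul_sq_not_modEq_neg_one (c : ℤ) : ¬ 17 * c ^ 2 ≡ -1 [ZMOD 239] := by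
  intro h
  have h' := (ZMod.intCast_eq_intCast_iff _ _ 239).mpr h
  push_cast at h'
  exact (by decide : ∀ w : ZMod 239, 17 * w ^ 2 ≠ -1) _ h'

lemma not_even_or_pos_of_ne_240 {N : ℤ} (hpos : 0 < N) (hne : N ≠ 240) :
    (¬ ∃ k : ℤ, ((N : ℚ) - 240) / 956 = 2 * k) ∨ 0 < ((N : ℚ) - 240) / 956 := by
  rcases hne.lt_or_gt with hlt | hgt
  · left
    rintro ⟨k, hk⟩
    have : N - 240 = 1912 * k := by
      rw [div_eq_iff (by norm_num)] at hk
      exact_mod_cast (by linarith : (N : ℚ) - 240 = 1912 * k)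
    omega
  · right
    have : (240 : ℚ) < N := by exact_mod_cast hgt
    apply div_pos <;> linarith

lemma not_even_of_not_modEq_neg_one {N : ℤ} (hN : ¬ N ≡ -1 [ZMOD 239]) :
    ¬ ∃ k : ℤ, (716 - (N : ℚ)) / 956 = 2 * k := by
  rintro ⟨k, hk⟩
  have : N = 716 - 1912 * k := by
    rw [div_eq_iff (by norm_num)] at hk
    exact_mod_cast (by linarith : (N : ℚ) = 716 - 1912 * k)
  exact hN (by unfold Int.ModEq; omega)

theorem obstruction_fails_for_P13_4_11 :
    let Q : Matrix (Fin 2) (Fin 2) ℤ := !![17, -4; -4, 15]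
    let Qq : Matrix (Fin 2) (Fin 2) ℚ := !![17, -4; -4, 15]
    let G := (Fin 2 → ℤ) ⧸ LinearMap.range (Matrix.toLin' Q)
    let g : G := Submodule.Quotient.mk (![0, 1] : Fin 2 → ℤ)
    let S : G → Set ℚ := fun α =>
      {q | ∃ ξ : Fin 2 → ℤ, Odd (ξ 0) ∧ Odd (ξ 1) ∧ Submodule.Quotient.mk ξ = α ∧
        q = (dotProduct (fun j => (ξ j : ℚ)) (Qq⁻¹.mulVec fun j => (ξ j : ℚ)) - 2) / 4}
    let f : ℕ → ℚ := fun i =>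
      (1 / 4) * ((1 / 239) * ((239 + (-1 : ℚ) ^ i * 239) / 2 - (i : ℚ)) ^ 2 - 1)
    ∀ u : (ZMod 239)ˣ, ∀ ε : ℤ, (ε = 1 ∨ ε = -1) →
      ∃ i : ℕ, i < 239 ∧ ∀ m : ℚ,
        IsLeast (S ((((u : ZMod 239) * (i : ZMod 239)).val) • g)) m →
        (¬ ∃ k : ℤ, (ε : ℚ) * m - f i = 2 * (k : ℚ)) ∨ 0 < (ε : ℚ) * m - f i := by
  intro Q Qq G g S f u ε hε
  refine ⟨1, by norm_num, fun m hm => ?_⟩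
  obtain ⟨ξ, hξ0, hξ1, hξg, rfl⟩ := hm.1
  have hf : f 1 = -119 / 478 := by norm_num [f]
  have hQq : Qq = Q.map Int.cast := goeritz_map_intCast.symm
  rw [hf, hQq, intCast_dotProduct_inv_mulVec, goeritz_det]
  have hN := goeritz_adjugate_form ξ
  set N := ξ ⬝ᵥ (Q.adjugate *ᵥ ξ)
  rcases hε with rfl | rfl
  · have hval : ((1 : ℤ) : ℚ) * (((N : ℚ) / (239 : ℤ) - 2) / 4) - -119 / 478 =
        ((N : ℚ) - 240) / 956 := by push_cast; ring
    rw [hval]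
    refine not_even_or_pos_of_ne_240 ?_ ?_
    · rw [hN]; exact goeritz_form_pos fun h => by simp [h] at hξ0
    · rw [hN]; exact goeritz_form_ne_240 hξ0 hξ1
  · have hval : ((-1 : ℤ) : ℚ) * (((N : ℚ) / (239 : ℤ) - 2) / 4) - -119 / 478 =
        (716 - (N : ℚ)) / 956 := by push_cast; ring
    rw [hval]
    left
    exact not_even_of_not_modEq_neg_one fun hN' =>
      seventeen_mul_sq_not_modEq_neg_one _ ((goeritz_form_modEq_of_mk_eq hξg).symm.trans hN')
end
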